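/- arXiv:1810.13362 — 3 statements merged into one kernel-verified Lean document; each statement's English description precedes it below -/
import Mathlib

section
/- Let Φ : [0,∞) → [0,∞) be a Young function with right derivative φ, and suppose there exist q ∈ (1,∞) and c ∈ [0,∞) such that Φ(λ) ≤ (1/q)·λ·φ(λ) + c for all λ ≥ 0; let q' = q/(q−1). Let (f_k)_{k≥0} be a nonnegative submartingale on a filtered probability space (Ω, 𝒜, (ℱ_k)_{k≥0}, P). Then for every n ≥ 0, the Luxemburg norms satisfy ‖max_{k ≤ n} f_k‖_Φ ≤ q'·(1 + c)·‖f_n‖_Φ. -/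
/-!
Put `Θ = (Φ - c)⁺`, with right derivative `θ`; the growth condition on `Φ` becomes
`q Θ(s) ≤ s θ(s)`. By the layer-cake formula and Doob's maximal inequality
`t P(f* ≥ t) ≤ E[f_n; f* ≥ t]`, one gets `E Θ(f*/q') ≤ E[f_n/q' ∫₀^{f*/q'} θ(t)/t dt]`, and the
real inequality `a ∫₀ᵇ θ(t)/t dt ≤ Θ(a)/(q-1) + Θ(b)` bounds the right-hand side by
`E Θ(f_n)/q + (1 - 1/q) E Θ(f*/q')`. Truncating `f*` makes the last term finite, so it can be
absorbed: `E Θ(f*/q') ≤ E Θ(f_n) ≤ E Φ(f_n)`. Finally `Φ(x/(1+c)) ≤ (Θ(x) + c)/(1+c)` by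
convexity, which turns this modular bound into the bound on Luxemburg norms.
-/

open MeasureTheory ENNReal Set Filter Topology

structure IsYoungDeriv (Θ θ : ℝ → ℝ) : Prop where
  hasDerivWithinAt : ∀ x ≥ 0, HasDerivWithinAt Θ (θ x) (Ici x) x
  continuousOn : ContinuousOn Θ (Ici 0)
  monotone : Monotone θ
  nonneg : ∀ t, 0 ≤ θ t
  map_zero : Θ 0 = 0

namespace IsYoungDeriv

variable {Θ θ : ℝ → ℝ} {q : ℝ}

theorem intervalIntegrable (h : IsYoungDeriv Θ θ) (x y : ℝ) :
    IntervalIntegrable θ volume x y :=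
  (h.monotone.monotoneOn _).intervalIntegrable

theorem intervalIntegrable_div (h : IsYoungDeriv Θ θ) {x y : ℝ} (hx : 0 < x) (hy : 0 < y) :
    IntervalIntegrable (fun t => θ t / t) volume x y := by
  refine (h.intervalIntegrable x y).mul_continuousOn (g := fun t => t⁻¹) (continuousOn_inv₀.mono ?_)
  intro t ht
  exact (lt_min hx hy |>.trans_le ht.1).ne'

theorem integral_eq_sub (h : IsYoungDeriv Θ θ) {x y : ℝ} (hx : 0 ≤ x) (hxy : x ≤ y) :
    ∫ t in x..y, θ t = Θ y - Θ x :=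
  intervalIntegral.integral_eq_sub_of_hasDeriv_right_of_le hxy
    (h.continuousOn.mono fun _ ht => hx.trans ht.1)
    (fun t ht => (h.hasDerivWithinAt t (hx.trans ht.1.le)).mono Ioi_subset_Ici_self)
    (h.intervalIntegrable x y)

theorem monotoneOn (h : IsYoungDeriv Θ θ) : MonotoneOn Θ (Ici 0) := fun _ hx _ _ hxy =>
  sub_nonneg.1 <| h.integral_eq_sub hx hxy ▸
    intervalIntegral.integral_nonneg hxy fun t _ => h.nonneg t

theorem map_nonneg (h : IsYoungDeriv Θ θ) {x : ℝ} (hx : 0 ≤ x) : 0 ≤ Θ x :=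
  h.map_zero ▸ h.monotoneOn self_mem_Ici hx hx

theorem measurable_comp (h : IsYoungDeriv Θ θ) {Ω : Type*} [MeasurableSpace Ω] {X : Ω → ℝ}
    (hX : Measurable X) (hX0 : ∀ ω, 0 ≤ X ω) : Measurable fun ω => Θ (X ω) := by
  have hcont : Continuous fun x => Θ (max x 0) :=
    h.continuousOn.comp_continuous (continuous_id.max continuous_const) fun x => le_max_right x 0
  simpa only [Function.comp_def, max_eq_left (hX0 _)] using hcont.measurable.comp hX

theorem mul_integral_div_le_sub (h : IsYoungDeriv Θ θ) {a b : ℝ} (ha : 0 < a) (hb : 0 < b) :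
    a * ∫ t in a..b, θ t / t ≤ Θ b - Θ a := by
  rw [← intervalIntegral.integral_const_mul]
  rcases le_total a b with hab | hba
  · rw [← h.integral_eq_sub ha.le hab]
    refine intervalIntegral.integral_mono_on hab ((h.intervalIntegrable_div ha hb).const_mul a)
      (h.intervalIntegrable a b) fun t ht => ?_
    rw [mul_div_left_comm]
    exact mul_le_of_le_one_right (h.nonneg t) ((div_le_one (ha.trans_le ht.1)).2 ht.1)
  · rw [intervalIntegral.integral_symm, neg_le, neg_sub, ← h.integral_eq_sub hb.le hba]
    refine intervalIntegral.integral_mono_on hba (h.intervalIntegrable b a)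
      ((h.intervalIntegrable_div hb ha).const_mul a) fun t ht => ?_
    rw [mul_div_left_comm]
    exact le_mul_of_one_le_right (h.nonneg t) ((one_le_div (hb.trans_le ht.1)).2 ht.2)

theorem mul_integral_div_le (h : IsYoungDeriv Θ θ) (hq : 1 < q)
    (hΘq : ∀ s ≥ 0, q * Θ s ≤ s * θ s) {ε y : ℝ} (hε : 0 < ε) (hεy : ε ≤ y) :
    y * ∫ t in ε..y, θ t / t ≤ q / (q - 1) * Θ y := by
  have hq0 : 0 < q := one_pos.trans hq
  have hy : 0 < y := hε.trans_le hεy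
  have hpos : ∀ s ∈ Icc ε y, 0 < s := fun s hs => hε.trans_le hs.1
  -- `s ↦ Θ s / s` grows at rate at least `(1 - 1/q) θ s / s`
  have hslope : ∫ t in ε..y, (q - 1) / q * (θ t / t) ≤ Θ y / y - Θ ε / ε := by
    refine intervalIntegral.integral_le_sub_of_hasDeriv_right_of_le hεy
      ((h.continuousOn.mono fun s hs => (hpos s hs).le).div continuousOn_id
        fun s hs => (hpos s hs).ne')
      (fun s hs => ((h.hasDerivWithinAt s (hpos s (Ioo_subset_Icc_self hs)).le).div
        (hasDerivWithinAt_id s _) (hpos s (Ioo_subset_Icc_self hs)).ne').mono Ioi_subset_Ici_self)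
      ((intervalIntegrable_iff_integrableOn_Icc_of_le hεy).1
        ((h.intervalIntegrable_div hε hy).const_mul _)) fun s hs => ?_
    have hs := hpos s (Ioo_subset_Icc_self hs)
    have hΘs : Θ s * 1 ≤ s * θ s / q := by
      rw [mul_one, le_div_iff₀ hq0, mul_comm]; exact hΘq s hs.le
    calc (q - 1) / q * (θ s / s) = (θ s * s - s * θ s / q) / s ^ 2 := by field_simp
      _ ≤ (θ s * id s - Θ s * 1) / id s ^ 2 := by simp only [id]; gcongr
  rw [intervalIntegral.integral_const_mul] at hslope
  have hΘε : 0 ≤ Θ ε / ε := div_nonneg (h.map_nonneg hε.le) hε.le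
  calc y * ∫ t in ε..y, θ t / t
      = y * (q / (q - 1)) * ((q - 1) / q * ∫ t in ε..y, θ t / t) := by
        field_simp [(sub_pos.2 hq).ne']
    _ ≤ y * (q / (q - 1)) * (Θ y / y) := by
        have : 0 ≤ q / (q - 1) := (div_pos hq0 (sub_pos.2 hq)).le
        gcongr
        linarith
    _ = q / (q - 1) * Θ y := by field_simp

theorem mul_integral_div_le_young (h : IsYoungDeriv Θ θ) (hq : 1 < q)
    (hΘq : ∀ s ≥ 0, q * Θ s ≤ s * θ s) {a b ε : ℝ} (ha : 0 ≤ a) (hε : 0 < ε) (hεb : ε ≤ b) :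
    a * ∫ t in ε..b, θ t / t ≤ Θ a / (q - 1) + Θ b := by
  have hb : 0 < b := hε.trans_le hεb
  have hΘa : 0 ≤ Θ a / (q - 1) := div_nonneg (h.map_nonneg ha) (sub_pos.2 hq).le
  rcases le_or_gt a ε with haε | hεa
  · have hint : 0 ≤ ∫ t in ε..b, θ t / t := intervalIntegral.integral_nonneg hεb
      fun t ht => div_nonneg (h.nonneg t) (hε.trans_le ht.1).le
    calc a * ∫ t in ε..b, θ t / t ≤ ε * ∫ t in ε..b, θ t / t := by gcongr
      _ ≤ Θ b - Θ ε := h.mul_integral_div_le_sub hε hb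
      _ ≤ Θ a / (q - 1) + Θ b := by linarith [h.map_nonneg hε.le]
  · have ha0 : 0 < a := hε.trans hεa
    rw [← intervalIntegral.integral_add_adjacent_intervals (b := a)
      (h.intervalIntegrable_div hε ha0) (h.intervalIntegrable_div ha0 hb), mul_add]
    have hlow := h.mul_integral_div_le hq hΘq hε hεa.le
    have hhigh := h.mul_integral_div_le_sub ha0 hb
    have hq' : q / (q - 1) * Θ a = Θ a / (q - 1) + Θ a := by
      field_simp [(sub_pos.2 hq).ne']; ring
    linarith

theorem mul_lintegral_div_le_young (h : IsYoungDeriv Θ θ) (hq : 1 < q)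
    (hΘq : ∀ s ≥ 0, q * Θ s ≤ s * θ s) {a b : ℝ} (ha : 0 ≤ a) :
    ENNReal.ofReal a * ∫⁻ t in Ioc 0 b, ENNReal.ofReal (θ t / t) ≤
      ENNReal.ofReal (Θ a / (q - 1) + Θ b) := by
  have hunion : Ioc 0 b = ⋃ n : ℕ, Ioc (1 / ((n : ℝ) + 1)) b := by
    ext t
    simp only [mem_Ioc, mem_iUnion]
    refine ⟨fun ht => ?_, fun ⟨n, hn⟩ => ⟨Nat.one_div_pos_of_nat.trans hn.1, hn.2⟩⟩
    obtain ⟨n, hn⟩ := exists_nat_one_div_lt ht.1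
    exact ⟨n, hn, ht.2⟩
  have hdir : Directed (· ⊆ ·) fun n : ℕ => Ioc (1 / ((n : ℝ) + 1)) b :=
    Monotone.directed_le fun m n hmn => Ioc_subset_Ioc_left (Nat.one_div_le_one_div hmn)
  rw [hunion, setLIntegral_iUnion_of_directed _ hdir, ENNReal.mul_iSup]
  refine iSup_le fun n => ?_
  have hε : (0 : ℝ) < 1 / ((n : ℝ) + 1) := Nat.one_div_pos_of_nat
  rcases le_or_gt (1 / ((n : ℝ) + 1)) b with hεb | hbε
  · rw [← ofReal_integral_eq_lintegral_ofReal (h.intervalIntegrable_div hε (hε.trans_le hεb)).1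
      ((ae_restrict_iff' measurableSet_Ioc).2 (ae_of_all _ fun t ht =>
        div_nonneg (h.nonneg t) (hε.trans ht.1).le)),
      ← ENNReal.ofReal_mul ha, ← intervalIntegral.integral_of_le hεb]
    exact ENNReal.ofReal_le_ofReal (h.mul_integral_div_le_young hq hΘq ha hε hεb)
  · rw [Ioc_eq_empty hbε.le.not_gt, Measure.restrict_empty, lintegral_zero_measure, mul_zero]
    exact zero_le

end IsYoungDeriv

theorem ENNReal.le_of_le_add_mul_self {s r x y : ℝ≥0∞} (hsr : s + r = 1) (hs : s ≠ 0)
    (hx : x ≠ ∞) (h : x ≤ s * y + r * x) : x ≤ y := by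
  have hs' : s ≠ ∞ := ne_top_of_le_ne_top one_ne_top (hsr ▸ le_self_add)
  have hr : r ≠ ∞ := ne_top_of_le_ne_top one_ne_top (hsr ▸ le_add_self)
  have hsum : s * x + r * x ≤ s * y + r * x := by rwa [← add_mul, hsr, one_mul]
  exact (ENNReal.mul_le_mul_iff_right hs hs').1
    (ENNReal.le_of_add_le_add_right (mul_ne_top hr hx) hsum)

section DoobBound

variable {Ω : Type*} [MeasurableSpace Ω]

def DoobBound (P : Measure Ω) (X Y : Ω → ℝ) : Prop :=
  ∀ t > 0, ENNReal.ofReal t * P {ω | t ≤ X ω} ≤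
    ∫⁻ ω in {ω | t ≤ X ω}, ENNReal.ofReal (Y ω) ∂P

variable {P : Measure Ω} {X Y : Ω → ℝ} {Θ θ : ℝ → ℝ}

theorem DoobBound.lintegral_comp_le [SFinite P] (hXY : DoobBound P X Y) (h : IsYoungDeriv Θ θ)
    (hX : Measurable X) (hX0 : ∀ ω, 0 ≤ X ω) (hY : Measurable Y) :
    ∫⁻ ω, ENNReal.ofReal (Θ (X ω)) ∂P ≤
      ∫⁻ ω, ENNReal.ofReal (Y ω) * (∫⁻ t in Ioc 0 (X ω), ENNReal.ofReal (θ t / t)) ∂P := by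
  set κ : ℝ → ℝ≥0∞ := fun t => ENNReal.ofReal (θ t / t)
  have hκ : Measurable κ := (h.monotone.measurable.div measurable_id).ennreal_ofReal
  set S : Set (ℝ × Ω) := {p | p.1 ≤ X p.2}
  have hS : MeasurableSet S := measurableSet_le measurable_fst (hX.comp measurable_snd)
  set H : ℝ × Ω → ℝ≥0∞ := S.indicator fun p => κ p.1 * ENNReal.ofReal (Y p.2)
  have hH : Measurable H :=
    ((hκ.comp measurable_fst).mul (hY.comp measurable_snd).ennreal_ofReal).indicator hS
  calc ∫⁻ ω, ENNReal.ofReal (Θ (X ω)) ∂P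
      = ∫⁻ t in Ioi 0, P {ω | t ≤ X ω} * ENNReal.ofReal (θ t) := by
        rw [← lintegral_comp_eq_lintegral_meas_le_mul P (ae_of_all _ hX0) hX.aemeasurable
          (fun t _ => h.intervalIntegrable 0 t) (ae_of_all _ fun t => h.nonneg t)]
        simp only [h.integral_eq_sub le_rfl (hX0 _), h.map_zero, sub_zero]
    _ ≤ ∫⁻ t in Ioi 0, ∫⁻ ω, H (t, ω) ∂P := by
        refine setLIntegral_mono' measurableSet_Ioi fun t (ht : 0 < t) => ?_
        calc P {ω | t ≤ X ω} * ENNReal.ofReal (θ t)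
            = κ t * (ENNReal.ofReal t * P {ω | t ≤ X ω}) := by
              rw [← mul_assoc, ← ENNReal.ofReal_mul (div_nonneg (h.nonneg t) ht.le),
                div_mul_cancel₀ _ ht.ne', mul_comm]
          _ ≤ κ t * ∫⁻ ω in {ω | t ≤ X ω}, ENNReal.ofReal (Y ω) ∂P := by gcongr; exact hXY t ht
          _ = ∫⁻ ω, H (t, ω) ∂P := by
              rw [← lintegral_const_mul' _ _ ENNReal.ofReal_ne_top,
                ← lintegral_indicator (measurableSet_le measurable_const hX)]
              rfl
    _ = ∫⁻ ω, (∫⁻ t in Ioi 0, H (t, ω)) ∂P :=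
        lintegral_lintegral_swap (f := fun t ω => H (t, ω)) hH.aemeasurable
    _ = ∫⁻ ω, ENNReal.ofReal (Y ω) * (∫⁻ t in Ioc 0 (X ω), κ t) ∂P := by
        refine lintegral_congr fun ω => ?_
        rw [← lintegral_const_mul' _ _ ENNReal.ofReal_ne_top, ← Ioi_inter_Iic,
          inter_comm, ← Measure.restrict_restrict measurableSet_Iic,
          ← lintegral_indicator measurableSet_Iic]
        refine lintegral_congr fun t => ?_
        simp only [H, S, indicator_apply, mem_ofPred_eq, mem_Iic, mul_comm]

theorem DoobBound.div_const (hXY : DoobBound P X Y) {r : ℝ} (hr : 0 < r) :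
    DoobBound P (fun ω => X ω / r) (fun ω => Y ω / r) := by
  intro t ht
  have hset : {ω | t ≤ X ω / r} = {ω | r * t ≤ X ω} := by
    ext ω
    rw [mem_ofPred_eq, mem_ofPred_eq, le_div_iff₀ hr, mul_comm]
  rw [hset]
  calc ENNReal.ofReal t * P {ω | r * t ≤ X ω}
      = ENNReal.ofReal r⁻¹ * (ENNReal.ofReal (r * t) * P {ω | r * t ≤ X ω}) := by
        rw [← mul_assoc, ← ENNReal.ofReal_mul (inv_nonneg.2 hr.le), inv_mul_cancel_left₀ hr.ne']
    _ ≤ ENNReal.ofReal r⁻¹ * ∫⁻ ω in {ω | r * t ≤ X ω}, ENNReal.ofReal (Y ω) ∂P := by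
        gcongr
        exact hXY _ (mul_pos hr ht)
    _ = ∫⁻ ω in {ω | r * t ≤ X ω}, ENNReal.ofReal (Y ω / r) ∂P := by
        rw [← lintegral_const_mul' _ _ ENNReal.ofReal_ne_top]
        simp only [← ENNReal.ofReal_mul (inv_nonneg.2 hr.le), inv_mul_eq_div]

theorem DoobBound.lintegral_comp_div_le [SFinite P] (hXY : DoobBound P X Y)
    (h : IsYoungDeriv Θ θ) {q : ℝ} (hq : 1 < q) (hΘq : ∀ s ≥ 0, q * Θ s ≤ s * θ s)
    (hX : Measurable X) (hX0 : ∀ ω, 0 ≤ X ω) (hY : Measurable Y) (hY0 : ∀ ω, 0 ≤ Y ω)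
    (hfin : ∫⁻ ω, ENNReal.ofReal (Θ (X ω / (q / (q - 1)))) ∂P ≠ ∞) :
    ∫⁻ ω, ENNReal.ofReal (Θ (X ω / (q / (q - 1)))) ∂P ≤ ∫⁻ ω, ENNReal.ofReal (Θ (Y ω)) ∂P := by
  have hq0 : 0 < q := one_pos.trans hq
  have hq1 : 0 < q - 1 := sub_pos.2 hq
  set q' := q / (q - 1)
  have hq' : 0 < q' := div_pos hq0 hq1
  have hX'0 : ∀ ω, 0 ≤ X ω / q' := fun ω => div_nonneg (hX0 ω) hq'.le
  have hpt : ∀ ω, ENNReal.ofReal (Y ω / q') * ∫⁻ t in Ioc 0 (X ω / q'), ENNReal.ofReal (θ t / t) ≤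
      ENNReal.ofReal (1 / q) * ENNReal.ofReal (Θ (Y ω)) +
        ENNReal.ofReal ((q - 1) / q) * ENNReal.ofReal (Θ (X ω / q')) := fun ω => calc
    _ = ENNReal.ofReal q'⁻¹ * (ENNReal.ofReal (Y ω) *
          ∫⁻ t in Ioc 0 (X ω / q'), ENNReal.ofReal (θ t / t)) := by
        rw [← mul_assoc, ← ENNReal.ofReal_mul (inv_nonneg.2 hq'.le), inv_mul_eq_div]
    _ ≤ ENNReal.ofReal q'⁻¹ * ENNReal.ofReal (Θ (Y ω) / (q - 1) + Θ (X ω / q')) := by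
        gcongr
        exact h.mul_lintegral_div_le_young hq hΘq (hY0 ω)
    _ = _ := by
        rw [← ENNReal.ofReal_mul (inv_nonneg.2 hq'.le), ← ENNReal.ofReal_mul (by positivity),
          ← ENNReal.ofReal_mul (div_nonneg hq1.le hq0.le),
          ← ENNReal.ofReal_add (mul_nonneg (by positivity) (h.map_nonneg (hY0 ω)))
            (mul_nonneg (div_nonneg hq1.le hq0.le) (h.map_nonneg (hX'0 ω)))]
        congr 1
        field_simp
        rw [div_mul_cancel₀ _ hq1.ne']
  refine ENNReal.le_of_le_add_mul_self (s := ENNReal.ofReal (1 / q))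
    (r := ENNReal.ofReal ((q - 1) / q)) ?_ (by simpa using hq0) hfin ?_
  · rw [← ENNReal.ofReal_add (by positivity) (div_nonneg hq1.le hq0.le), ← add_div,
      add_sub_cancel, div_self hq0.ne', ENNReal.ofReal_one]
  calc ∫⁻ ω, ENNReal.ofReal (Θ (X ω / q')) ∂P
      ≤ ∫⁻ ω, ENNReal.ofReal (Y ω / q') *
          (∫⁻ t in Ioc 0 (X ω / q'), ENNReal.ofReal (θ t / t)) ∂P :=
        (hXY.div_const hq').lintegral_comp_le h (hX.div_const _) hX'0 (hY.div_const _)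
    _ ≤ _ := lintegral_mono hpt
    _ = _ := by
        rw [lintegral_add_left ((h.measurable_comp hY hY0).ennreal_ofReal.const_mul _),
          lintegral_const_mul _ (h.measurable_comp hY hY0).ennreal_ofReal,
          lintegral_const_mul _ (h.measurable_comp (hX.div_const _) hX'0).ennreal_ofReal]

end DoobBound

section Submartingale

variable {Ω : Type*} {m0 : MeasurableSpace Ω} {P : Measure Ω} [IsFiniteMeasure P]
  {ℱ : Filtration ℕ m0} {f : ℕ → Ω → ℝ}

theorem MeasureTheory.Submartingale.doobBound_min_sup' (hf : Submartingale f ℱ P)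
    (hf0 : ∀ k ω, 0 ≤ f k ω) (n : ℕ) (L : ℝ) :
    DoobBound P (fun ω => min ((Finset.range (n + 1)).sup' Finset.nonempty_range_add_one
      fun k => f k ω) L) (f n) := by
  intro t ht
  rcases le_or_gt t L with htL | hLt
  · simp only [le_min_iff, htL, and_true]
    have hmax := maximal_ineq hf (fun k ω => hf0 k ω) (ε := t.toNNReal) n
    rw [Real.coe_toNNReal _ ht.le] at hmax
    exact hmax.trans_eq (ofReal_integral_eq_lintegral_ofReal (hf.integrable n).integrableOn
      (ae_of_all _ (hf0 n)))
  · have hempty : {ω | t ≤ min ((Finset.range (n + 1)).sup' Finset.nonempty_range_add_one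
        fun k => f k ω) L} = ∅ :=
      eq_empty_of_forall_notMem fun ω hω => (hω.trans (min_le_right _ _)).not_gt hLt
    rw [hempty, measure_empty, mul_zero]
    exact zero_le

theorem MeasureTheory.Submartingale.lintegral_comp_sup'_div_le (hf : Submartingale f ℱ P)
    (hf0 : ∀ k ω, 0 ≤ f k ω) {Θ θ : ℝ → ℝ} (h : IsYoungDeriv Θ θ) {q : ℝ} (hq : 1 < q)
    (hΘq : ∀ s ≥ 0, q * Θ s ≤ s * θ s) (n : ℕ) :
    ∫⁻ ω, ENNReal.ofReal (Θ ((Finset.range (n + 1)).sup' Finset.nonempty_range_add_one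
      (fun k => f k ω) / (q / (q - 1)))) ∂P ≤ ∫⁻ ω, ENNReal.ofReal (Θ (f n ω)) ∂P := by
  set q' := q / (q - 1)
  have hq' : 0 < q' := div_pos (one_pos.trans hq) (sub_pos.2 hq)
  set fstar := fun ω => (Finset.range (n + 1)).sup' Finset.nonempty_range_add_one fun k => f k ω
  have hmeas : ∀ k, Measurable (f k) := fun k => (hf.stronglyMeasurable k).measurable.le (ℱ.le k)
  have hfstar : Measurable fstar := Finset.measurable_range_sup'' fun k _ => hmeas k
  have hfstar0 : ∀ ω, 0 ≤ fstar ω := fun ω =>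
    (hf0 n ω).trans (Finset.le_sup' (fun k => f k ω) (Finset.self_mem_range_succ n))
  set X : ℕ → Ω → ℝ := fun M ω => min (fstar ω) M / q'
  have hX0 : ∀ M ω, 0 ≤ X M ω := fun M ω =>
    div_nonneg (le_min (hfstar0 ω) M.cast_nonneg) hq'.le
  have hXmeas : ∀ M, Measurable (X M) := fun M => (hfstar.min measurable_const).div_const _
  have hXmono : ∀ ω, Monotone fun M => ENNReal.ofReal (Θ (X M ω)) := fun ω M N hMN =>
    ENNReal.ofReal_le_ofReal <| h.monotoneOn (hX0 M ω) (hX0 N ω) <|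
      div_le_div_of_nonneg_right (min_le_min_left _ (Nat.cast_le.2 hMN)) hq'.le
  have hfin : ∀ M : ℕ, ∫⁻ ω, ENNReal.ofReal (Θ (X M ω)) ∂P ≠ ∞ := fun M =>
    ne_top_of_le_ne_top (lintegral_const_lt_top (μ := P) ofReal_ne_top).ne <|
      lintegral_mono fun ω => ENNReal.ofReal_le_ofReal <|
        h.monotoneOn (hX0 M ω) (div_nonneg M.cast_nonneg hq'.le) <|
          div_le_div_of_nonneg_right (min_le_right _ _) hq'.le
  have htrunc : ∀ M : ℕ, ∫⁻ ω, ENNReal.ofReal (Θ (X M ω)) ∂P ≤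
      ∫⁻ ω, ENNReal.ofReal (Θ (f n ω)) ∂P := fun M =>
    (hf.doobBound_min_sup' hf0 n M).lintegral_comp_div_le h hq hΘq (hfstar.min measurable_const)
      (fun ω => le_min (hfstar0 ω) M.cast_nonneg) (hmeas n) (hf0 n) (hfin M)
  calc ∫⁻ ω, ENNReal.ofReal (Θ (fstar ω / q')) ∂P
      ≤ ∫⁻ ω, ⨆ M : ℕ, ENNReal.ofReal (Θ (X M ω)) ∂P := lintegral_mono fun ω =>
        le_iSup_of_le ⌈fstar ω⌉₊ (by simp only [X, min_eq_left (Nat.le_ceil _), le_rfl])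
    _ = ⨆ M : ℕ, ∫⁻ ω, ENNReal.ofReal (Θ (X M ω)) ∂P :=
        lintegral_iSup (fun M => (h.measurable_comp (hXmeas M) (hX0 M)).ennreal_ofReal)
          fun M N hMN ω => hXmono ω hMN
    _ ≤ _ := iSup_le htrunc

end Submartingale

section YoungFunction

variable {Φ φ : ℝ → ℝ} {a c q : ℝ}

theorem ConvexOn.monotoneOn_of_hasDerivWithinAt_Ici (hconv : ConvexOn ℝ (Ici a) Φ)
    (hφ : ∀ x ≥ a, HasDerivWithinAt Φ (φ x) (Ici x) x) : MonotoneOn φ (Ici a) := by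
  intro x hx y hy hxy
  rcases hxy.eq_or_lt with rfl | hlt
  · rfl
  have hleft : φ x ≤ slope Φ x y := hconv.le_slope_of_hasDerivWithinAt_Ioi hx hy hlt
    ((hφ x hx).mono Ioi_subset_Ici_self)
  refine hleft.trans (ge_of_tendsto ((hasDerivWithinAt_iff_tendsto_slope' self_notMem_Ioi).1
    ((hφ y hy).mono Ioi_subset_Ici_self)) (eventually_nhdsWithin_of_forall fun t ht => ?_))
  rw [slope_def_field, slope_def_field]
  exact hconv.slope_mono_adjacent hx (mem_Ici.2 (hy.trans (le_of_lt ht))) hlt ht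

theorem MonotoneOn.nonneg_of_hasDerivWithinAt_Ici (hmono : MonotoneOn Φ (Ici a))
    (hφ : ∀ x ≥ a, HasDerivWithinAt Φ (φ x) (Ici x) x) {x : ℝ} (hx : a ≤ x) : 0 ≤ φ x := by
  refine ge_of_tendsto ((hasDerivWithinAt_iff_tendsto_slope' self_notMem_Ioi).1
    ((hφ x hx).mono Ioi_subset_Ici_self)) (eventually_nhdsWithin_of_forall fun t (ht : x < t) => ?_)
  rw [slope_def_field]
  exact div_nonneg (sub_nonneg.2 (hmono hx (hx.trans ht.le) ht.le)) (sub_pos.2 ht).le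

theorem ConvexOn.continuousOn_Ici_of_hasDerivWithinAt (hconv : ConvexOn ℝ (Ici a) Φ)
    (hφ : ∀ x ≥ a, HasDerivWithinAt Φ (φ x) (Ici x) x) : ContinuousOn Φ (Ici a) := by
  intro x (hx : a ≤ x)
  rcases hx.eq_or_lt with rfl | hlt
  · exact (hφ _ le_rfl).continuousWithinAt
  · have := hconv.continuousOn_interior
    rw [interior_Ici] at this
    exact (this.continuousAt (Ioi_mem_nhds hlt)).continuousWithinAt

theorem ConvexOn.map_div_le (hconv : ConvexOn ℝ (Ici 0) Φ) (h0 : Φ 0 = 0) {x r : ℝ}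
    (hx : 0 ≤ x) (hr : 1 ≤ r) : Φ (x / r) ≤ Φ x / r := by
  have hr0 : 0 < r := one_pos.trans_le hr
  have := hconv.2 (mem_Ici.2 hx) (self_mem_Ici : (0 : ℝ) ∈ Ici 0) (inv_nonneg.2 hr0.le)
    (sub_nonneg.2 (inv_le_one_of_one_le₀ hr)) (add_sub_cancel _ _)
  simpa [h0, div_eq_inv_mul] using this

noncomputable def excess (Φ : ℝ → ℝ) (c x : ℝ) : ℝ := max (Φ x - c) 0

/-- Evaluated at `max x 0` so that it is monotone on all of `ℝ`. -/
noncomputable def excessDeriv (Φ φ : ℝ → ℝ) (c x : ℝ) : ℝ :=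
  if Φ (max x 0) < c then 0 else φ (max x 0)

theorem excessDeriv_of_nonneg {x : ℝ} (hx : 0 ≤ x) :
    excessDeriv Φ φ c x = if Φ x < c then 0 else φ x := by
  rw [excessDeriv, max_eq_left hx]

theorem hasDerivWithinAt_excess (hmono : MonotoneOn Φ (Ici 0))
    (hφ : ∀ x ≥ 0, HasDerivWithinAt Φ (φ x) (Ici x) x) {x : ℝ} (hx : 0 ≤ x) :
    HasDerivWithinAt (excess Φ c) (excessDeriv Φ φ c x) (Ici x) x := by
  rw [excessDeriv_of_nonneg hx]
  split_ifs with hlt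
  · have hzero : ∀ᶠ t in 𝓝[Ici x] x, excess Φ c t = 0 := by
      filter_upwards [(hφ x hx).continuousWithinAt.eventually_lt continuousWithinAt_const hlt]
        with t ht
      exact max_eq_right (sub_nonpos.2 ht.le)
    exact (hasDerivWithinAt_const x _ 0).congr_of_eventuallyEq hzero
      (max_eq_right (sub_nonpos.2 hlt.le))
  · have hsub : ∀ t ∈ Ici x, excess Φ c t = Φ t - c := fun t (ht : x ≤ t) =>
      max_eq_left (sub_nonneg.2 ((not_lt.1 hlt).trans (hmono hx (hx.trans ht) ht)))
    exact ((hφ x hx).sub_const c).congr hsub (hsub x self_mem_Ici)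

theorem isYoungDeriv_excess (hconv : ConvexOn ℝ (Ici 0) Φ) (hmono : MonotoneOn Φ (Ici 0))
    (h0 : Φ 0 = 0) (hφ : ∀ x ≥ 0, HasDerivWithinAt Φ (φ x) (Ici x) x) (hc : 0 ≤ c) :
    IsYoungDeriv (excess Φ c) (excessDeriv Φ φ c) where
  hasDerivWithinAt _ hx := hasDerivWithinAt_excess hmono hφ hx
  continuousOn := ((hconv.continuousOn_Ici_of_hasDerivWithinAt hφ).sub continuousOn_const).sup
    continuousOn_const
  monotone x y hxy := by
    have hxy' : max x 0 ≤ max y 0 := max_le_max_right 0 hxy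
    have hφ' := hconv.monotoneOn_of_hasDerivWithinAt_Ici hφ (le_max_right x 0) (le_max_right y 0)
      hxy'
    have hΦ := hmono (le_max_right x 0) (le_max_right y 0) hxy'
    unfold excessDeriv
    split_ifs with hx hy hy
    · rfl
    · exact hmono.nonneg_of_hasDerivWithinAt_Ici hφ (le_max_right y 0)
    · exact absurd (hΦ.trans_lt hy) hx
    · exact hφ'
  nonneg x := by
    unfold excessDeriv
    split_ifs
    exacts [le_rfl, hmono.nonneg_of_hasDerivWithinAt_Ici hφ (le_max_right x 0)]
  map_zero := by simp [excess, h0, hc]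

theorem mul_excess_le (hq : 0 < q)
    (hqc : ∀ lam ≥ (0 : ℝ), Φ lam ≤ (1 / q) * lam * φ lam + c) {s : ℝ} (hs : 0 ≤ s) :
    q * excess Φ c s ≤ s * excessDeriv Φ φ c s := by
  rw [excessDeriv_of_nonneg hs, excess]
  split_ifs with hlt
  · simp [max_eq_right (sub_nonpos.2 hlt.le)]
  · rw [max_eq_left (sub_nonneg.2 (not_lt.1 hlt))]
    have := hqc s hs
    calc q * (Φ s - c) ≤ q * ((1 / q) * s * φ s) := by gcongr; linarith
      _ = s * φ s := by field_simp

end YoungFunction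

theorem MeasureTheory.Submartingale.lintegral_young_sup'_div_le_one {Ω : Type*}
    {m0 : MeasurableSpace Ω} {P : Measure Ω} [IsProbabilityMeasure P] {ℱ : Filtration ℕ m0}
    {f : ℕ → Ω → ℝ} (hf : Submartingale f ℱ P) (hf0 : ∀ k ω, 0 ≤ f k ω) {Φ φ : ℝ → ℝ}
    (hconv : ConvexOn ℝ (Ici 0) Φ) (hmono : MonotoneOn Φ (Ici 0)) (h0 : Φ 0 = 0)
    (hφ : ∀ x ≥ 0, HasDerivWithinAt Φ (φ x) (Ici x) x) {q c : ℝ} (hq : 1 < q) (hc : 0 ≤ c)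
    (hqc : ∀ lam ≥ (0 : ℝ), Φ lam ≤ (1 / q) * lam * φ lam + c) (n : ℕ)
    (hfn : ∫⁻ ω, ENNReal.ofReal (Φ (f n ω)) ∂P ≤ 1) :
    ∫⁻ ω, ENNReal.ofReal (Φ ((Finset.range (n + 1)).sup' Finset.nonempty_range_add_one
      (fun k => f k ω) / (q / (q - 1) * (1 + c)))) ∂P ≤ 1 := by
  set q' := q / (q - 1)
  have hq' : 0 < q' := div_pos (one_pos.trans hq) (sub_pos.2 hq)
  set fstar := fun ω => (Finset.range (n + 1)).sup' Finset.nonempty_range_add_one fun k => f k ω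
  have hfstar0 : ∀ ω, 0 ≤ fstar ω := fun ω =>
    (hf0 n ω).trans (Finset.le_sup' (fun k => f k ω) (Finset.self_mem_range_succ n))
  have hdoob : ∫⁻ ω, ENNReal.ofReal (excess Φ c (fstar ω / q')) ∂P ≤ 1 := by
    refine (hf.lintegral_comp_sup'_div_le hf0 (isYoungDeriv_excess hconv hmono h0 hφ hc) hq
      (fun s hs => mul_excess_le (one_pos.trans hq) hqc hs) n).trans
      ((lintegral_mono fun ω => ENNReal.ofReal_le_ofReal ?_).trans hfn)
    exact max_le (by linarith) (h0 ▸ hmono self_mem_Ici (hf0 n ω) (hf0 n ω))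
  have hpt : ∀ ω, ENNReal.ofReal (Φ (fstar ω / (q' * (1 + c)))) ≤ ENNReal.ofReal (1 + c)⁻¹ *
      (ENNReal.ofReal (excess Φ c (fstar ω / q')) + ENNReal.ofReal c) := by
    intro ω
    have hx : 0 ≤ fstar ω / q' := div_nonneg (hfstar0 ω) hq'.le
    have hexcess : 0 ≤ excess Φ c (fstar ω / q') := le_max_right _ _
    rw [← ENNReal.ofReal_add hexcess hc,
      ← ENNReal.ofReal_mul (by positivity), ← div_div, inv_mul_eq_div]
    refine ENNReal.ofReal_le_ofReal ((hconv.map_div_le h0 hx (le_add_of_nonneg_right hc)).trans ?_)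
    gcongr
    exact sub_le_iff_le_add.1 (le_max_left _ _)
  calc ∫⁻ ω, ENNReal.ofReal (Φ (fstar ω / (q' * (1 + c)))) ∂P
      ≤ ∫⁻ ω, ENNReal.ofReal (1 + c)⁻¹ *
          (ENNReal.ofReal (excess Φ c (fstar ω / q')) + ENNReal.ofReal c) ∂P := lintegral_mono hpt
    _ = ENNReal.ofReal (1 + c)⁻¹ *
          (∫⁻ ω, ENNReal.ofReal (excess Φ c (fstar ω / q')) ∂P + ENNReal.ofReal c) := by
        rw [lintegral_const_mul' _ _ ofReal_ne_top, lintegral_add_right _ measurable_const,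
          lintegral_const, measure_univ, mul_one]
    _ ≤ ENNReal.ofReal (1 + c)⁻¹ * (1 + ENNReal.ofReal c) := by gcongr
    _ = 1 := by
        rw [← ENNReal.ofReal_one, ← ENNReal.ofReal_add zero_le_one hc,
          ← ENNReal.ofReal_mul (by positivity), inv_mul_cancel₀ (by positivity)]

section Luxemburg

variable {Ω : Type*} [MeasurableSpace Ω]

noncomputable def luxemburgNorm (Φ : ℝ → ℝ) (P : Measure Ω) (g : Ω → ℝ) : ℝ≥0∞ :=
  sInf {l | ∃ lam : ℝ, 0 < lam ∧ l = ENNReal.ofReal lam ∧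
    ∫⁻ ω, ENNReal.ofReal (Φ (g ω / lam)) ∂P ≤ 1}

theorem luxemburgNorm_le_mul {Φ : ℝ → ℝ} {P : Measure Ω} {g h : Ω → ℝ} {K : ℝ} (hK : 0 < K)
    (hgh : ∀ lam > 0, ∫⁻ ω, ENNReal.ofReal (Φ (g ω / lam)) ∂P ≤ 1 →
      ∫⁻ ω, ENNReal.ofReal (Φ (h ω / (K * lam))) ∂P ≤ 1) :
    luxemburgNorm Φ P h ≤ ENNReal.ofReal K * luxemburgNorm Φ P g := by
  unfold luxemburgNorm
  conv_rhs => rw [sInf_eq_iInf', ENNReal.mul_iInf_of_ne (by simpa using hK) ofReal_ne_top]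
  refine le_iInf ?_
  rintro ⟨_, lam, hlam, rfl, hg⟩
  exact sInf_le_of_le ⟨K * lam, mul_pos hK hlam, rfl, hgh lam hlam hg⟩ (ENNReal.ofReal_mul hK.le).le

end Luxemburg

theorem stmt8_general {Ω : Type*} {m0 : MeasurableSpace Ω} (P : Measure Ω)
    [IsProbabilityMeasure P] (ℱ : Filtration ℕ m0)
    (f : ℕ → Ω → ℝ) (hf : Submartingale f ℱ P) (hfpos : ∀ k ω, 0 ≤ f k ω)
    (Φ φ : ℝ → ℝ)
    (hconv : ConvexOn ℝ (Set.Ici (0:ℝ)) Φ)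
    (hmono : MonotoneOn Φ (Set.Ici (0:ℝ)))
    (h0 : Φ 0 = 0)
    (hφ : ∀ x ≥ (0:ℝ), HasDerivWithinAt Φ (φ x) (Set.Ici x) x)
    (q c : ℝ) (hq : 1 < q) (hc : 0 ≤ c)
    (hqc : ∀ lam ≥ (0:ℝ), Φ lam ≤ (1 / q) * lam * φ lam + c)
    (n : ℕ) :
    sInf {l : ℝ≥0∞ | ∃ lam : ℝ, 0 < lam ∧ l = ENNReal.ofReal lam ∧
        ∫⁻ ω, ENNReal.ofReal
          (Φ (((Finset.range (n + 1)).sup' Finset.nonempty_range_add_one fun k => f k ω) / lam)) ∂P ≤ 1}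
      ≤ ENNReal.ofReal (q / (q - 1) * (1 + c)) *
        sInf {l : ℝ≥0∞ | ∃ lam : ℝ, 0 < lam ∧ l = ENNReal.ofReal lam ∧
          ∫⁻ ω, ENNReal.ofReal (Φ (f n ω / lam)) ∂P ≤ 1} := by
  have hq1 : 0 < q - 1 := sub_pos.2 hq
  refine luxemburgNorm_le_mul (g := f n) (by positivity) fun lam hlam hfn => ?_
  have hlam' : 0 ≤ lam⁻¹ := inv_nonneg.2 hlam.le
  have key := (hf.smul_nonneg hlam').lintegral_young_sup'_div_le_one
    (fun k ω => mul_nonneg hlam' (hfpos k ω)) hconv hmono h0 hφ hq hc hqc n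
    (by simpa only [Pi.smul_apply, smul_eq_mul, inv_mul_eq_div] using hfn)
  simpa only [Pi.smul_apply, smul_eq_mul, inv_mul_eq_div, ← Finset.sup'_div₀ hlam.le,
    div_div, mul_comm lam] using key

/-- Under the hypotheses of Statement 7 (a Young function `Φ` with right
derivative `φ` satisfying `Φ(λ) ≤ (1/q)·λ·φ(λ) + c`, `q' := q/(q-1)`), for every nonnegative
submartingale `(f_k)` and every `n`, the Luxemburg norms (with `inf ∅ = ∞`) satisfy
`‖max_{k ≤ n} f_k‖_Φ ≤ q'·(1+c)·‖f_n‖_Φ`. -/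
theorem stmt8 {Ω : Type*} {m0 : MeasurableSpace Ω} (P : Measure Ω)
    [IsProbabilityMeasure P] (ℱ : Filtration ℕ m0)
    (f : ℕ → Ω → ℝ) (hf : Submartingale f ℱ P) (hfpos : ∀ k ω, 0 ≤ f k ω)
    (Φ φ : ℝ → ℝ)
    (hconv : ConvexOn ℝ (Set.Ici (0:ℝ)) Φ)
    (hmono : MonotoneOn Φ (Set.Ici (0:ℝ)))
    (h0 : Φ 0 = 0)
    (hpos : ∃ x₁ > (0:ℝ), 0 < Φ x₁)
    (hφ : ∀ x ≥ (0:ℝ), HasDerivWithinAt Φ (φ x) (Set.Ici x) x)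
    (q c : ℝ) (hq : 1 < q) (hc : 0 ≤ c)
    (hqc : ∀ lam ≥ (0:ℝ), Φ lam ≤ (1 / q) * lam * φ lam + c)
    (n : ℕ) :
    sInf {l : ℝ≥0∞ | ∃ lam : ℝ, 0 < lam ∧ l = ENNReal.ofReal lam ∧
        ∫⁻ ω, ENNReal.ofReal
          (Φ (((Finset.range (n + 1)).sup' Finset.nonempty_range_add_one fun k => f k ω) / lam)) ∂P ≤ 1}
      ≤ ENNReal.ofReal (q / (q - 1) * (1 + c)) *
        sInf {l : ℝ≥0∞ | ∃ lam : ℝ, 0 < lam ∧ l = ENNReal.ofReal lam ∧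
          ∫⁻ ω, ENNReal.ofReal (Φ (f n ω / lam)) ∂P ≤ 1} :=
  stmt8_general P ℱ f hf hfpos Φ φ hconv hmono h0 hφ q c hq hc hqc n
end

section
/- Let (T, Σ, μ) be a σ-finite measure space and p : T → [1,∞) measurable, and define Φ(t,λ) = λ^{p(t)}. Then Φ satisfies the Δ₂ condition — i.e., there exist a constant K > 1 and a nonnegative h ∈ L¹(T, μ) such that Φ(t, 2λ) ≤ K·Φ(t,λ) + h(t) for a.e. t ∈ T and all λ ≥ 0 — if and only if p is essentially bounded. Moreover, when p is essentially bounded, one may take K = 2^{ess sup p} and h = 0. -/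
open MeasureTheory Set Filter

/-- Let `(T, Σ, μ)` be σ-finite, `p : T → [1,∞)` measurable and set
`Φ(t,λ) = λ^{p(t)}`.  Then `Φ` satisfies the `Δ₂` condition (there are `K > 1` and a
nonnegative `h ∈ L¹(μ)` with `Φ(t,2λ) ≤ K·Φ(t,λ) + h(t)` for a.e. `t` and all `λ ≥ 0`)
iff `p` is essentially bounded; moreover, if `p` is essentially bounded one may take
`K = 2^{ess sup p}` and `h = 0`. -/
theorem stmt9 {T : Type*} [MeasurableSpace T] (μ : Measure T) [SigmaFinite μ]
    (p : T → ℝ) (hp : Measurable p) (hp1 : ∀ t, 1 ≤ p t) :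
    ((∃ K : ℝ, 1 < K ∧ ∃ h : T → ℝ, Integrable h μ ∧ (∀ t, 0 ≤ h t) ∧
        ∀ᵐ t ∂μ, ∀ lam ≥ (0:ℝ), (2 * lam) ^ p t ≤ K * lam ^ p t + h t)
      ↔ ∃ C : ℝ, ∀ᵐ t ∂μ, p t ≤ C) ∧
    ((∃ C : ℝ, ∀ᵐ t ∂μ, p t ≤ C) →
      ∀ᵐ t ∂μ, ∀ lam ≥ (0:ℝ), (2 * lam) ^ p t ≤ 2 ^ essSup p μ * lam ^ p t) := by
  constructor
  · constructor
    · rintro ⟨K, hK, h, hint, hh0, hae⟩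
      refine ⟨Real.logb 2 K, ?_⟩
      filter_upwards [hae] with t ht
      by_contra hc
      push_neg at hc
      have hK0 : (0:ℝ) < K := lt_trans one_pos hK
      have h2p : K < 2 ^ p t := by
        calc K = 2 ^ Real.logb 2 K := (Real.rpow_logb two_pos (by norm_num) hK0).symm
        _ < 2 ^ p t := Real.rpow_lt_rpow_of_exponent_lt one_lt_two hc
      set ε := 2 ^ p t - K with hε
      have hεpos : 0 < ε := by linarith
      set lam := max 1 (h t / ε + 1) with hlam
      have hlam1 : 1 ≤ lam := le_max_left _ _
      have hlam0 : (0:ℝ) ≤ lam := by linarith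
      have key := ht lam hlam0
      have hmul : (2 * lam) ^ p t = 2 ^ p t * lam ^ p t :=
        Real.mul_rpow (by norm_num) hlam0
      have h1 : ε * lam ^ p t ≤ h t := by
        rw [hmul] at key; nlinarith [Real.rpow_nonneg hlam0 (p t)]
      have h2 : lam ≤ lam ^ p t := by
        calc lam = lam ^ (1:ℝ) := (Real.rpow_one lam).symm
        _ ≤ lam ^ p t := Real.rpow_le_rpow_of_exponent_le hlam1 (hp1 t)
      have h3 : h t / ε + 1 ≤ lam := le_max_right _ _
      have h4 : h t < ε * lam := by
        have h5 : h t / ε < lam := by linarith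
        calc h t = ε * (h t / ε) := by field_simp
        _ < ε * lam := mul_lt_mul_of_pos_left h5 hεpos
      nlinarith
    · rintro ⟨C, hC⟩
      refine ⟨max (2 ^ C) 2, lt_of_lt_of_le one_lt_two (le_max_right _ _),
        0, integrable_zero _ _ _, fun t => le_refl 0, ?_⟩
      filter_upwards [hC] with t htC lam hlam
      rw [Real.mul_rpow (by norm_num) hlam, Pi.zero_apply, add_zero]
      have h2 : (2:ℝ) ^ p t ≤ max (2 ^ C) 2 :=
        le_trans (Real.rpow_le_rpow_of_exponent_le one_le_two htC) (le_max_left _ _)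
      exact mul_le_mul_of_nonneg_right h2 (Real.rpow_nonneg hlam (p t))
  · rintro ⟨C, hC⟩
    have hb : IsBoundedUnder (· ≤ ·) (ae μ) p := ⟨C, by simpa [eventually_map] using hC⟩
    filter_upwards [ae_le_essSup hb] with t ht lam hlam
    rw [Real.mul_rpow (by norm_num) hlam]
    exact mul_le_mul_of_nonneg_right
      (Real.rpow_le_rpow_of_exponent_le one_le_two ht) (Real.rpow_nonneg hlam (p t))
end

section
/- (Good-λ inequality implies a Φ-moment inequality.) Let (Ω, 𝒜, P) be a probability space and F, G : Ω → [0,∞) measurable. Suppose there exist δ ∈ (0,1] and ε ≥ 0 such that P(G > 2λ and F ≤ δλ) ≤ ε·P(G > λ) for all λ > 0. Let Φ : [0,∞) → [0,∞) be nondecreasing with Φ(0) = 0, and suppose there exist K > 1 and b ≥ 0 with Φ(2λ) ≤ K·Φ(λ) + b for all λ ≥ 0. Let M be a positive integer with 2^{−M} ≤ δ, and assume ε·K ≤ 1/2 and E[Φ(G)] < ∞. Then E[Φ(G)] ≤ 2·K^{M+1}·E[Φ(F)] + 2b·(1 + M·K^{M+1}). -/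
/-!
By a union bound the good-λ hypothesis gives `P(G/2 > λ) ≤ ε P(G > λ) + P(F/δ > λ)` for all
`λ > 0`. Every superlevel set of `Φ` is an open or closed right half-line, and continuity of
measure extends the inequality to those, so the layer-cake formula yields
`E Φ(G/2) ≤ ε E Φ(G) + E Φ(F/δ)`. One doubling step gives
`E Φ(G) ≤ εK E Φ(G) + K E Φ(F/δ) + b`; as `εK ≤ 1/2` and `E Φ(G) < ∞`, the first term is
absorbed. Finally `F/δ ≤ 2^M F`, and `M` doubling steps bound `E Φ(F/δ)` by `E Φ(F)`.
-/

open MeasureTheory ENNReal NNReal Set Filter Topology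

theorem measure_Ioi_le_of_eventually_nhdsGT {μ ν : Measure ℝ} {c : ℝ}
    (h : ∀ᶠ x in 𝓝[>] c, μ (Ioi x) ≤ ν (Ioi x)) : μ (Ioi c) ≤ ν (Ioi c) := by
  set u : ℕ → ℝ := fun n => c + 1 / (n + 1)
  have hcu (n : ℕ) : c < u n := by simp only [u, lt_add_iff_pos_right]; positivity
  have hu : Tendsto u atTop (𝓝[>] c) := tendsto_nhdsWithin_iff.2
    ⟨by simpa [u] using tendsto_one_div_add_atTop_nhds_zero_nat.const_add c, .of_forall hcu⟩
  have hmono : Monotone fun n => Ioi (u n) := fun m n hmn =>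
    Ioi_subset_Ioi (by simp only [u]; gcongr)
  have hunion : ⋃ n, Ioi (u n) = Ioi c := by
    refine subset_antisymm (iUnion_subset fun n => Ioi_subset_Ioi (hcu n).le)
      fun x (hx : c < x) => ?_
    obtain ⟨n, hn⟩ := exists_nat_one_div_lt (sub_pos.2 hx)
    exact mem_iUnion.2 ⟨n, show c + 1 / (n + 1) < x by linarith⟩
  have hlim := tendsto_measure_iUnion_atTop (μ := μ) hmono
  rw [hunion] at hlim
  exact le_of_tendsto hlim ((hu.eventually h).mono fun n hn =>
    hn.trans (measure_mono (Ioi_subset_Ioi (hcu n).le)))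

theorem measure_Ici_le_of_eventually_nhdsLT {μ ν : Measure ℝ} [IsFiniteMeasure ν] {c : ℝ}
    (h : ∀ᶠ x in 𝓝[<] c, μ (Ioi x) ≤ ν (Ioi x)) : μ (Ici c) ≤ ν (Ici c) := by
  set u : ℕ → ℝ := fun n => c - 1 / (n + 1)
  have huc (n : ℕ) : u n < c := by simp only [u, sub_lt_self_iff]; positivity
  have hu : Tendsto u atTop (𝓝[<] c) := tendsto_nhdsWithin_iff.2
    ⟨by simpa [u] using tendsto_one_div_add_atTop_nhds_zero_nat.const_sub c, .of_forall huc⟩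
  have hanti : Antitone fun n => Ioi (u n) := fun m n hmn =>
    Ioi_subset_Ioi (by simp only [u]; gcongr)
  have hinter : ⋂ n, Ioi (u n) = Ici c := by
    refine subset_antisymm (fun x hx => ?_) (subset_iInter fun n => Ici_subset_Ioi.2 (huc n))
    refine mem_Ici.2 (le_of_forall_pos_lt_add fun r hr => ?_)
    obtain ⟨n, hn⟩ := exists_nat_one_div_lt hr
    linarith [show c - 1 / (n + 1) < x from mem_iInter.1 hx n]
  have hlim := tendsto_measure_iInter_atTop (μ := ν)
    (fun _ => measurableSet_Ioi.nullMeasurableSet) hanti ⟨0, measure_ne_top _ _⟩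
  rw [hinter] at hlim
  exact ge_of_tendsto hlim ((hu.eventually h).mono fun n hn =>
    (measure_mono (Ici_subset_Ioi.2 (huc n))).trans hn)

theorem IsUpperSet.measure_le_of_measure_Ioi_le {μ ν : Measure ℝ} [IsFiniteMeasure ν]
    (h : ∀ x > 0, μ (Ioi x) ≤ ν (Ioi x)) {A : Set ℝ} (hA : IsUpperSet A) (hA0 : A ⊆ Ioi 0) :
    μ A ≤ ν A := by
  rcases A.eq_empty_or_nonempty with rfl | hne
  · simp
  have hbdd : BddBelow A := ⟨0, fun x hx => (hA0 hx).le⟩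
  have hc0 : 0 ≤ sInf A := le_csInf hne fun x hx => (hA0 hx).le
  by_cases hc : sInf A ∈ A
  · have hAc : A = Ici (sInf A) :=
      subset_antisymm (fun x hx => csInf_le hbdd hx) (hA.Ici_subset hc)
    rw [hAc]
    refine measure_Ici_le_of_eventually_nhdsLT ?_
    filter_upwards [Ioo_mem_nhdsLT (hA0 hc)] with x hx using h x hx.1
  · have hAc : A = Ioi (sInf A) := by
      refine subset_antisymm (fun x hx => (csInf_le hbdd hx).lt_of_ne ?_) fun x hx => ?_
      · rintro rfl; exact hc hx
      · obtain ⟨a, ha, hax⟩ := exists_lt_of_csInf_lt hne hx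
        exact hA hax.le ha
    rw [hAc]
    refine measure_Ioi_le_of_eventually_nhdsGT ?_
    filter_upwards [self_mem_nhdsWithin] with x hx using h x (hc0.trans_lt hx)

theorem lintegral_le_of_measure_Ioi_le {μ ν : Measure ℝ} [IsFiniteMeasure ν]
    (h : ∀ x > 0, μ (Ioi x) ≤ ν (Ioi x)) {f : ℝ → ℝ} (hf : Monotone f) (hf_nonneg : 0 ≤ f)
    (hf0 : f 0 = 0) : ∫⁻ x, ENNReal.ofReal (f x) ∂μ ≤ ∫⁻ x, ENNReal.ofReal (f x) ∂ν := by
  rw [lintegral_eq_lintegral_meas_lt μ (ae_of_all _ hf_nonneg) hf.measurable.aemeasurable,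
    lintegral_eq_lintegral_meas_lt ν (ae_of_all _ hf_nonneg) hf.measurable.aemeasurable]
  refine setLIntegral_mono' measurableSet_Ioi fun t (ht : 0 < t) => ?_
  refine IsUpperSet.measure_le_of_measure_Ioi_le h (fun x y hxy hx => hx.trans_le (hf hxy)) ?_
  intro x (hx : t < f x)
  by_contra hx0
  have : f x ≤ 0 := hf0 ▸ hf (not_lt.1 hx0)
  linarith

theorem lintegral_comp_le_of_measure_lt_le {Ω : Type*} [MeasurableSpace Ω] {P : Measure Ω}
    [IsFiniteMeasure P] {X Y Z : Ω → ℝ} (hX : Measurable X) (hY : Measurable Y)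
    (hZ : Measurable Z) (hX0 : ∀ ω, 0 ≤ X ω) (hY0 : ∀ ω, 0 ≤ Y ω) (hZ0 : ∀ ω, 0 ≤ Z ω)
    {a : ℝ≥0}
    (h : ∀ x > 0, P {ω | x < X ω} ≤ a * P {ω | x < Y ω} + P {ω | x < Z ω})
    {f : ℝ → ℝ} (hf : MonotoneOn f (Ici 0)) (hf0 : f 0 = 0) :
    ∫⁻ ω, ENNReal.ofReal (f (X ω)) ∂P
      ≤ a * ∫⁻ ω, ENNReal.ofReal (f (Y ω)) ∂P + ∫⁻ ω, ENNReal.ofReal (f (Z ω)) ∂P := by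
  set g : ℝ → ℝ := fun x => f (max x 0)
  have hg : Monotone g := fun x y hxy =>
    hf (le_max_right x 0) (le_max_right y 0) (max_le_max_right 0 hxy)
  have hg_nonneg : 0 ≤ g := fun x => by
    simpa [hf0] using hf (le_refl (0:ℝ)) (le_max_right x 0) (le_max_right x 0)
  have hlaw {V : Ω → ℝ} (hV : Measurable V) (hV0 : ∀ ω, 0 ≤ V ω) :
      ∫⁻ ω, ENNReal.ofReal (f (V ω)) ∂P = ∫⁻ x, ENNReal.ofReal (g x) ∂P.map V := by
    rw [lintegral_map hg.measurable.ennreal_ofReal hV]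
    exact lintegral_congr fun ω => by simp only [g, max_eq_left (hV0 ω)]
  have htail : ∀ x > 0, P.map X (Ioi x) ≤ (a • P.map Y + P.map Z) (Ioi x) := fun x hx => by
    simp only [Measure.add_apply, Measure.smul_apply,
      Measure.map_apply hX measurableSet_Ioi, Measure.map_apply hY measurableSet_Ioi,
      Measure.map_apply hZ measurableSet_Ioi]
    exact h x hx
  have hle := lintegral_le_of_measure_Ioi_le htail hg hg_nonneg (by simp [g, hf0])
  rwa [lintegral_add_measure, lintegral_smul_measure, ← hlaw hX hX0, ← hlaw hY hY0,
    ← hlaw hZ hZ0] at hle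

theorem measure_lt_half_le_of_goodLambda {Ω : Type*} [MeasurableSpace Ω] {P : Measure Ω}
    {F G : Ω → ℝ} {δ x : ℝ} {a : ℝ≥0∞} (hδ : 0 < δ)
    (hgood : P {ω | 2 * x < G ω ∧ F ω ≤ δ * x} ≤ a * P {ω | x < G ω}) :
    P {ω | x < G ω / 2} ≤ a * P {ω | x < G ω} + P {ω | x < F ω / δ} := by
  calc P {ω | x < G ω / 2}
      ≤ P ({ω | 2 * x < G ω ∧ F ω ≤ δ * x} ∪ {ω | x < F ω / δ}) := by
        refine measure_mono fun ω (hω : x < G ω / 2) => ?_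
        by_cases hF : F ω ≤ δ * x
        · exact Or.inl ⟨by linarith, hF⟩
        · exact Or.inr (show x < F ω / δ by rw [lt_div_iff₀ hδ]; linarith)
    _ ≤ a * P {ω | x < G ω} + P {ω | x < F ω / δ} :=
        (measure_union_le _ _).trans (by gcongr)

theorem le_pow_mul_add_of_two_mul_le {Φ : ℝ → ℝ} {K b : ℝ} (hK : 1 ≤ K) (hb : 0 ≤ b)
    (hΔ₂ : ∀ x ≥ 0, Φ (2 * x) ≤ K * Φ x + b) {x : ℝ} (hx : 0 ≤ x) (n : ℕ) :
    Φ (2 ^ n * x) ≤ K ^ n * Φ x + n * b * K ^ n := by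
  induction n with
  | zero => simp
  | succ n ih =>
    have hK0 : 0 ≤ K := zero_le_one.trans hK
    calc Φ (2 ^ (n + 1) * x) = Φ (2 * (2 ^ n * x)) := by ring_nf
      _ ≤ K * Φ (2 ^ n * x) + b := hΔ₂ _ (by positivity)
      _ ≤ K * (K ^ n * Φ x + n * b * K ^ n) + b * K ^ (n + 1) := by
        gcongr
        exact le_mul_of_one_le_right hb (one_le_pow₀ hK)
      _ = K ^ (n + 1) * Φ x + (n + 1 : ℕ) * b * K ^ (n + 1) := by push_cast; ring

theorem le_pow_mul_add_of_inv_two_pow_le {Φ : ℝ → ℝ} {K b δ : ℝ} (hΦ : MonotoneOn Φ (Ici 0))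
    (hK : 1 ≤ K) (hb : 0 ≤ b) (hΔ₂ : ∀ x ≥ 0, Φ (2 * x) ≤ K * Φ x + b) {M : ℕ} (hδ : 0 < δ)
    (hMδ : ((2 : ℝ) ^ M)⁻¹ ≤ δ) {x : ℝ} (hx : 0 ≤ x) :
    Φ (x / δ) ≤ K ^ M * Φ x + M * b * K ^ M := by
  have hxδ : x / δ ≤ 2 ^ M * x := by
    rw [div_eq_mul_inv, mul_comm]
    exact mul_le_mul_of_nonneg_right (inv_le_of_inv_le₀ (by positivity) hMδ) hx
  exact (hΦ (div_nonneg hx hδ.le) (mul_nonneg (by positivity) hx) hxδ).trans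
    (le_pow_mul_add_of_two_mul_le hK hb hΔ₂ hx M)

theorem lintegral_ofReal_le_mul_add {Ω : Type*} [MeasurableSpace Ω] {P : Measure Ω}
    [IsProbabilityMeasure P] {u v : Ω → ℝ} {a c : ℝ} (ha : 0 ≤ a)
    (h : ∀ ω, u ω ≤ a * v ω + c) :
    ∫⁻ ω, ENNReal.ofReal (u ω) ∂P
      ≤ ENNReal.ofReal a * ∫⁻ ω, ENNReal.ofReal (v ω) ∂P + ENNReal.ofReal c := by
  calc ∫⁻ ω, ENNReal.ofReal (u ω) ∂P
      ≤ ∫⁻ ω, (ENNReal.ofReal a * ENNReal.ofReal (v ω) + ENNReal.ofReal c) ∂P := by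
        refine lintegral_mono fun ω => (ENNReal.ofReal_le_ofReal (h ω)).trans ?_
        rw [← ENNReal.ofReal_mul ha]
        exact ENNReal.ofReal_add_le
    _ = ENNReal.ofReal a * ∫⁻ ω, ENNReal.ofReal (v ω) ∂P + ENNReal.ofReal c := by
        rw [lintegral_add_right _ measurable_const, lintegral_const_mul' _ _ ENNReal.ofReal_ne_top,
          lintegral_const, measure_univ, mul_one]

theorem ENNReal.le_two_mul_of_le_inv_two_mul_add {x c : ℝ≥0∞} (hx : x ≠ ⊤)
    (h : x ≤ 2⁻¹ * x + c) : x ≤ 2 * c := by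
  have : x / 2 ≤ c := by
    rw [← ENNReal.sub_half hx, ENNReal.div_eq_inv_mul]
    exact tsub_le_iff_left.2 h
  rwa [ENNReal.div_le_iff_le_mul (Or.inl two_ne_zero) (Or.inl ofNat_ne_top), mul_comm] at this

theorem lintegral_le_two_mul_of_goodLambda {Ω : Type*} [MeasurableSpace Ω] {P : Measure Ω}
    [IsProbabilityMeasure P] {F G : Ω → ℝ} (hF : Measurable F) (hG : Measurable G)
    (hF0 : ∀ ω, 0 ≤ F ω) (hG0 : ∀ ω, 0 ≤ G ω) {δ ε : ℝ} (hδ : 0 < δ)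
    (hgood : ∀ x > 0,
      P {ω | 2 * x < G ω ∧ F ω ≤ δ * x} ≤ ENNReal.ofReal ε * P {ω | x < G ω})
    {Φ : ℝ → ℝ} (hΦ : MonotoneOn Φ (Ici 0)) (hΦ0 : Φ 0 = 0) {K b : ℝ} (hK : 0 ≤ K)
    (hΔ₂ : ∀ x ≥ 0, Φ (2 * x) ≤ K * Φ x + b) (hεK : ε * K ≤ 1 / 2)
    (hfin : ∫⁻ ω, ENNReal.ofReal (Φ (G ω)) ∂P ≠ ⊤) :
    ∫⁻ ω, ENNReal.ofReal (Φ (G ω)) ∂P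
      ≤ 2 * (ENNReal.ofReal K * ∫⁻ ω, ENNReal.ofReal (Φ (F ω / δ)) ∂P + ENNReal.ofReal b) := by
  set IG := ∫⁻ ω, ENNReal.ofReal (Φ (G ω)) ∂P
  set IFδ := ∫⁻ ω, ENNReal.ofReal (Φ (F ω / δ)) ∂P
  -- `ENNReal.ofReal ε` is by definition the coercion of `ε.toNNReal`
  have hhalf : ∫⁻ ω, ENNReal.ofReal (Φ (G ω / 2)) ∂P ≤ ENNReal.ofReal ε * IG + IFδ :=
    lintegral_comp_le_of_measure_lt_le (a := ε.toNNReal) (hG.div_const 2) hG (hF.div_const δ)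
      (fun ω => by linarith [hG0 ω]) hG0 (fun ω => div_nonneg (hF0 ω) hδ.le)
      (fun x hx => measure_lt_half_le_of_goodLambda hδ (hgood x hx)) hΦ hΦ0
  have hdoubling : IG ≤ ENNReal.ofReal K * ∫⁻ ω, ENNReal.ofReal (Φ (G ω / 2)) ∂P
      + ENNReal.ofReal b :=
    lintegral_ofReal_le_mul_add hK fun ω => by
      simpa only [mul_div_cancel₀ _ (two_ne_zero (α := ℝ))]
        using hΔ₂ (G ω / 2) (by linarith [hG0 ω])
  have hεK' : ENNReal.ofReal ε * ENNReal.ofReal K ≤ 2⁻¹ := by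
    rw [← ENNReal.ofReal_mul' hK, ← ENNReal.ofReal_ofNat 2, ← ENNReal.ofReal_inv_of_pos two_pos]
    exact ENNReal.ofReal_le_ofReal (by linarith)
  refine ENNReal.le_two_mul_of_le_inv_two_mul_add hfin ?_
  calc IG ≤ ENNReal.ofReal K * (ENNReal.ofReal ε * IG + IFδ) + ENNReal.ofReal b := by
        grw [hdoubling, hhalf]
    _ = ENNReal.ofReal ε * ENNReal.ofReal K * IG + (ENNReal.ofReal K * IFδ + ENNReal.ofReal b) := by
        ring
    _ ≤ 2⁻¹ * IG + (ENNReal.ofReal K * IFδ + ENNReal.ofReal b) := by gcongr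

theorem stmt11_general {Ω : Type*} [MeasurableSpace Ω] (P : Measure Ω) [IsProbabilityMeasure P]
    (F G : Ω → ℝ) (hF : Measurable F) (hG : Measurable G)
    (hFpos : ∀ ω, 0 ≤ F ω) (hGpos : ∀ ω, 0 ≤ G ω)
    (δ ε : ℝ) (hδ : δ ∈ Set.Ioc (0:ℝ) 1)
    (hgood : ∀ lam > (0:ℝ),
      P {ω | 2 * lam < G ω ∧ F ω ≤ δ * lam} ≤ ENNReal.ofReal ε * P {ω | lam < G ω})
    (Φ : ℝ → ℝ) (hmono : MonotoneOn Φ (Set.Ici (0:ℝ))) (h0 : Φ 0 = 0)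
    (K b : ℝ) (hK : 1 < K) (hb : 0 ≤ b)
    (hΔ₂ : ∀ lam ≥ (0:ℝ), Φ (2 * lam) ≤ K * Φ lam + b)
    (M : ℕ) (hMδ : ((2:ℝ) ^ M)⁻¹ ≤ δ)
    (hεK : ε * K ≤ 1 / 2)
    (hfin : ∫⁻ ω, ENNReal.ofReal (Φ (G ω)) ∂P < ⊤) :
    ∫⁻ ω, ENNReal.ofReal (Φ (G ω)) ∂P
      ≤ ENNReal.ofReal (2 * K ^ (M + 1)) * ∫⁻ ω, ENNReal.ofReal (Φ (F ω)) ∂P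
        + ENNReal.ofReal (2 * b * (1 + M * K ^ (M + 1))) := by
  obtain ⟨hδ0, -⟩ := hδ
  have hK0 : 0 ≤ K := by linarith
  set IF := ∫⁻ ω, ENNReal.ofReal (Φ (F ω)) ∂P
  have hscale : ∫⁻ ω, ENNReal.ofReal (Φ (F ω / δ)) ∂P
      ≤ ENNReal.ofReal (K ^ M) * IF + ENNReal.ofReal (M * b * K ^ M) :=
    lintegral_ofReal_le_mul_add (pow_nonneg hK0 M) fun ω =>
      le_pow_mul_add_of_inv_two_pow_le hmono hK.le hb hΔ₂ hδ0 hMδ (hFpos ω)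
  have hlin : ENNReal.ofReal (2 * K ^ (M + 1))
      = 2 * (ENNReal.ofReal K * ENNReal.ofReal (K ^ M)) := by
    rw [← ENNReal.ofReal_mul hK0, ← ENNReal.ofReal_ofNat 2, ← ENNReal.ofReal_mul zero_le_two]
    ring_nf
  have hconst : ENNReal.ofReal (2 * b * (1 + M * K ^ (M + 1)))
      = 2 * (ENNReal.ofReal K * ENNReal.ofReal (M * b * K ^ M) + ENNReal.ofReal b) := by
    rw [← ENNReal.ofReal_mul hK0, ← ENNReal.ofReal_add (by positivity) hb,
      ← ENNReal.ofReal_ofNat 2, ← ENNReal.ofReal_mul zero_le_two]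
    ring_nf
  calc ∫⁻ ω, ENNReal.ofReal (Φ (G ω)) ∂P
      ≤ 2 * (ENNReal.ofReal K * ∫⁻ ω, ENNReal.ofReal (Φ (F ω / δ)) ∂P + ENNReal.ofReal b) :=
        lintegral_le_two_mul_of_goodLambda hF hG hFpos hGpos hδ0 hgood hmono h0 hK0 hΔ₂ hεK
          hfin.ne
    _ ≤ 2 * (ENNReal.ofReal K * (ENNReal.ofReal (K ^ M) * IF + ENNReal.ofReal (M * b * K ^ M))
        + ENNReal.ofReal b) := by gcongr
    _ = ENNReal.ofReal (2 * K ^ (M + 1)) * IF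
        + ENNReal.ofReal (2 * b * (1 + M * K ^ (M + 1))) := by
      rw [hlin, hconst]
      ring

/-- (Good-λ inequality implies a Φ-moment inequality.)
On a probability space, let `F, G ≥ 0` be measurable with
`P(G > 2λ, F ≤ δλ) ≤ ε·P(G > λ)` for all `λ > 0`, where `δ ∈ (0,1]`, `ε ≥ 0`.
Let `Φ` be nondecreasing on `[0,∞)` with `Φ(0) = 0` and `Φ(2λ) ≤ K·Φ(λ) + b`
(`K > 1`, `b ≥ 0`).  If `M ≥ 1` with `2^{-M} ≤ δ`, `ε·K ≤ 1/2` and `E[Φ(G)] < ∞`, then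
`E[Φ(G)] ≤ 2·K^{M+1}·E[Φ(F)] + 2b·(1 + M·K^{M+1})`. -/
theorem stmt11 {Ω : Type*} [MeasurableSpace Ω] (P : Measure Ω) [IsProbabilityMeasure P]
    (F G : Ω → ℝ) (hF : Measurable F) (hG : Measurable G)
    (hFpos : ∀ ω, 0 ≤ F ω) (hGpos : ∀ ω, 0 ≤ G ω)
    (δ ε : ℝ) (hδ : δ ∈ Set.Ioc (0:ℝ) 1) (hε : 0 ≤ ε)
    (hgood : ∀ lam > (0:ℝ),
      P {ω | 2 * lam < G ω ∧ F ω ≤ δ * lam} ≤ ENNReal.ofReal ε * P {ω | lam < G ω})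
    (Φ : ℝ → ℝ) (hmono : MonotoneOn Φ (Set.Ici (0:ℝ))) (h0 : Φ 0 = 0)
    (K b : ℝ) (hK : 1 < K) (hb : 0 ≤ b)
    (hΔ₂ : ∀ lam ≥ (0:ℝ), Φ (2 * lam) ≤ K * Φ lam + b)
    (M : ℕ) (hM : 1 ≤ M) (hMδ : ((2:ℝ) ^ M)⁻¹ ≤ δ)
    (hεK : ε * K ≤ 1 / 2)
    (hfin : ∫⁻ ω, ENNReal.ofReal (Φ (G ω)) ∂P < ⊤) :
    ∫⁻ ω, ENNReal.ofReal (Φ (G ω)) ∂P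
      ≤ ENNReal.ofReal (2 * K ^ (M + 1)) * ∫⁻ ω, ENNReal.ofReal (Φ (F ω)) ∂P
        + ENNReal.ofReal (2 * b * (1 + M * K ^ (M + 1))) :=
  stmt11_general P F G hF hG hFpos hGpos δ ε hδ hgood Φ hmono h0 K b hK hb hΔ₂ M hMδ hεK hfin
end
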